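/- The reverse function on counter profiles, rev(i⁺←, c_max, i⁺→) = (i⁺←, ⊥, ⊥) if i⁺→ = ⊥ and (i⁺→, c_max, i⁺←) otherwise, is an involution satisfying rev(a ∘ b) = rev(b) ∘ rev(a), and corresponds to reversing counter-operation sequences: Profile(w.reverse) = rev(Profile(w)) for every w ∈ {i,r,n}*. -/

import Mathlib

/-!
The block list of a word counts the increments in its reset-separated segments, so reversing
the word reverses its block list. A profile records the first block, the maximum of the inner
blocks and the last block; reversing the block list swaps the first and the last block and keeps
the inner maximum, which is what `prev` does. The algebraic identities follow by computation on
the two shapes `(a, ⊥, ⊥)` and `(a, c, d)` with `a, d ≠ ⊥` that valid profiles can have.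
-/

/-- Counter operations of B-automata / RPRS: increment, reset, no-op. -/
inductive Op : Type
  | inc | res | nop
deriving DecidableEq

/-- Counter profiles: triples `(i⁺←, c_max, i⁺→)` over `ℕ ∪ {⊥}`. -/
abbrev CP : Type := Option ℕ × Option ℕ × Option ℕ

/-- Order on `ℕ ∪ {⊥}`: numbers canonically, `⊥` only comparable with itself. -/
def ole : Option ℕ → Option ℕ → Prop
  | some m, some n => m ≤ n
  | none, none => True
  | _, _ => False

/-- Component-wise order on counter profiles. -/
def le3 (p q : CP) : Prop := ole p.1 q.1 ∧ ole p.2.1 q.2.1 ∧ ole p.2.2 q.2.2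

/-- Strict component-wise order on counter profiles. -/
def lt3 (p q : CP) : Prop := le3 p q ∧ ¬ le3 q p

/-- The list of numbers of increments in the blocks of a counter-operation
sequence delimited by resets (read left to right; always nonempty). -/
def blocks : List Op → List ℕ
  | [] => [0]
  | Op.inc :: w =>
      match blocks w with
      | [] => [1]
      | b :: bs => (b + 1) :: bs
  | Op.nop :: w => blocks w
  | Op.res :: w => 0 :: blocks w

/-- The counter profile of a counter-operation sequence. -/
def Profile (w : List Op) : CP :=
  match blocks w with
  | [] => (some 0, none, none)
  | [b] => (some b, none, none)
  | b :: bs =>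
      (some b,
       if 2 ≤ bs.length then some (bs.dropLast.foldr max 0) else none,
       some (bs.getLast!))

/-- A profile is valid if it arises from some counter-operation sequence. -/
def ValidCP (p : CP) : Prop := ∃ w : List Op, Profile w = p

/-- The neutral counter profile. -/
def cpOne : CP := (some 0, none, none)

/-- Concatenation of counter profiles (induced by word concatenation). -/
def pcomp : CP → CP → CP
  | (a, _, none), (a', c', d') => (Option.map₂ (· + ·) a a', c', d')
  | (a, c, some d), (a', _, none) => (a, c, some (d + a'.getD 0))
  | (a, c, some d), (a', c', some d') =>
      (a, some (max (c.getD 0) (max (c'.getD 0) (d + a'.getD 0))), some d')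

/-- The reverse function on counter profiles. -/
def prev : CP → CP
  | (a, _, none) => (a, none, none)
  | (a, c, some d) => (some d, c, a)

namespace List

theorem splitOn_reverse {α : Type*} [BEq α] [LawfulBEq α] (a : α) (l : List α) :
    l.reverse.splitOn a = ((l.splitOn a).map reverse).reverse := by
  by_cases ha : a ∈ l
  · obtain ⟨xs, as, rfl⟩ := append_of_mem ha
    rw [reverse_append, reverse_cons, append_assoc, singleton_append,
      splitOn_append_cons_self, splitOn_append_cons_self, splitOn_reverse a xs,
      splitOn_reverse a as, map_append, reverse_append]
  · rw [splitOn_eq_singleton ha, splitOn_eq_singleton (by simpa using ha)]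
    rfl
termination_by l.length
decreasing_by all_goals grind

theorem foldr_max_reverse {α : Type*} [LinearOrder α] (l : List α) (a : α) :
    l.reverse.foldr max a = l.foldr max a := by
  rw [foldr_reverse, ← foldl_eq_foldr]
  congr 1
  funext x y
  exact max_comm y x

end List

theorem blocks_eq_map_count_splitOn (w : List Op) :
    blocks w = (w.splitOn Op.res).map (List.count Op.inc) := by
  induction w with
  | nil => rfl
  | cons o w ih =>
    rw [List.splitOn_cons_eq_if_modifyHead]
    obtain ⟨c, cs, hw⟩ := List.ne_nil_iff_exists_cons.mp (List.splitOn_ne_nil Op.res w)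
    cases o <;> simp [blocks, ih, hw]

theorem blocks_reverse (w : List Op) : blocks w.reverse = (blocks w).reverse := by
  simp only [blocks_eq_map_count_splitOn, List.splitOn_reverse, List.map_reverse, List.map_map,
    Function.comp_def, List.count_reverse]

theorem blocks_ne_nil (w : List Op) : blocks w ≠ [] := by
  simp [blocks_eq_map_count_splitOn, List.splitOn_ne_nil Op.res w]

def profileOfBlocks : List ℕ → CP
  | [] => (some 0, none, none)
  | [b] => (some b, none, none)
  | b :: bs =>
      (some b,
       if 2 ≤ bs.length then some (bs.dropLast.foldr max 0) else none,
       some (bs.getLast!))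

theorem profile_eq_profileOfBlocks (w : List Op) : Profile w = profileOfBlocks (blocks w) := rfl

theorem profileOfBlocks_shape : ∀ l : List ℕ, l ≠ [] →
    (∃ a, profileOfBlocks l = (some a, none, none)) ∨
      ∃ a c d, profileOfBlocks l = (some a, c, some d)
  | [b], _ => .inl ⟨b, rfl⟩
  | b :: _ :: _, _ => .inr ⟨b, _, _, rfl⟩

theorem profileOfBlocks_cons_concat (b : ℕ) (ms : List ℕ) (x : ℕ) :
    profileOfBlocks (b :: (ms ++ [x])) =
      (some b, if ms = [] then none else some (ms.foldr max 0), some x) := by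
  cases ms with
  | nil => rfl
  | cons m ms =>
    simp [profileOfBlocks, List.getLast!_eq_getLast?_getD, List.dropLast_cons_of_ne_nil,
      List.getLast?_cons]

theorem profileOfBlocks_reverse (l : List ℕ) (hl : l ≠ []) :
    profileOfBlocks l.reverse = prev (profileOfBlocks l) := by
  obtain ⟨b, bs, rfl⟩ := List.ne_nil_iff_exists_cons.mp hl
  rcases bs.eq_nil_or_concat with rfl | ⟨ms, x, rfl⟩
  · rfl
  · rw [List.concat_eq_append, show (b :: (ms ++ [x])).reverse = x :: (ms.reverse ++ [b]) by simp,
      profileOfBlocks_cons_concat, profileOfBlocks_cons_concat]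
    simp only [prev, List.reverse_eq_nil_iff, List.foldr_max_reverse]

theorem profile_reverse_eq_prev (w : List Op) : Profile w.reverse = prev (Profile w) := by
  rw [profile_eq_profileOfBlocks, profile_eq_profileOfBlocks, blocks_reverse,
    profileOfBlocks_reverse _ (blocks_ne_nil w)]

theorem ValidCP.shape {p : CP} (hp : ValidCP p) :
    (∃ a, p = (some a, none, none)) ∨ ∃ a c d, p = (some a, c, some d) := by
  obtain ⟨w, rfl⟩ := hp
  exact profileOfBlocks_shape (blocks w) (blocks_ne_nil w)

theorem ValidCP.prev_prev {p : CP} (hp : ValidCP p) : prev (prev p) = p := by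
  rcases hp.shape with ⟨a, rfl⟩ | ⟨a, c, d, rfl⟩ <;> rfl

theorem ValidCP.prev_pcomp {p q : CP} (hp : ValidCP p) (hq : ValidCP q) :
    prev (pcomp p q) = pcomp (prev q) (prev p) := by
  rcases hp.shape with ⟨a, rfl⟩ | ⟨a, c, d, rfl⟩ <;>
    rcases hq.shape with ⟨a', rfl⟩ | ⟨a', c', d', rfl⟩ <;>
    simp [pcomp, prev, Option.map₂] <;> omega

/-- `prev` is an involution on valid profiles, is an anti-homomorphism for
profile concatenation, and corresponds to reversing counter-operation
sequences. -/
theorem profile_reverse :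
    (∀ p : CP, ValidCP p → prev (prev p) = p) ∧
    (∀ p q : CP, ValidCP p → ValidCP q →
      prev (pcomp p q) = pcomp (prev q) (prev p)) ∧
    (∀ w : List Op, Profile w.reverse = prev (Profile w)) :=
  ⟨fun _ hp => hp.prev_prev, fun _ _ hp hq => hp.prev_pcomp hq, profile_reverse_eq_prev⟩
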